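/- arXiv:2002.03973 — 4 statements merged into one kernel-verified Lean document; each statement's English description precedes it below -/
import Mathlib

section
/- Let N ≥ 1 and f : ℝ → ℝ continuous with primitive F(t) = ∫₀ᵗ f. Assume: (f1) f(t)/|t|^{1+4/N} → 0 as t → 0; (f3) F(t)/|t|^{2+4/N} → +∞ as |t| → ∞; (f4) t ↦ (f(t)t − 2F(t))/|t|^{2+4/N} is strictly decreasing on (−∞,0) and strictly increasing on (0,∞). Then f(t)·t > (2 + 4/N)·F(t) > 0 for all t ≠ 0. -/
open Filter Set Topology Asymptotics

/-!
Write `c = 4 / N`, `F̃(t) = f(t) t - 2 F(t)` and `q(t) = F̃(t) / t ^ (2 + c)` for `t > 0`.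
By (f1), `F(t) = o(t ^ (2 + c))` and `q(t) → 0` as `t → 0⁺`, so the monotonicity (f4) makes
`q` positive on `(0, ∞)`. Since `(F(t) / t²)' = F̃(t) / t³ = q(t) t ^ (c - 1)` and
`F(t) / t² → 0` at `0⁺`, the value `F(t) / t² = ∫₀ᵗ q(s) s ^ (c - 1) ds` lies strictly between `0`
and `q(t) ∫₀ᵗ s ^ (c - 1) ds = F̃(t) / (c t²)`; these are the two inequalities. The comparison is
carried out by derivatives on `(0, t]` rather than by an improper integral. Negative `t` reduce
to positive ones through `f ↦ -f(-·)`, `F ↦ F(-·)`.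
-/

theorem StrictMonoOn.lt_of_tendsto_nhdsGT {α β : Type*} [LinearOrder α] [TopologicalSpace α]
    [OrderTopology α] [DenselyOrdered α] [LinearOrder β] [TopologicalSpace β]
    [OrderClosedTopology β] {φ : α → β} {a b : α} {L : β} (hab : a < b)
    (hφ : StrictMonoOn φ (Ioc a b)) (hlim : Tendsto φ (𝓝[>] a) (𝓝 L)) : L < φ b := by
  obtain ⟨m, ham, hmb⟩ := exists_between hab
  have : (𝓝[>] a).NeBot := nhdsGT_neBot_of_exists_gt ⟨b, hab⟩
  have hLm : L ≤ φ m := by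
    refine le_of_tendsto hlim ?_
    filter_upwards [Ioo_mem_nhdsGT ham] with x hx
    exact (hφ ⟨hx.1, hx.2.le.trans hmb.le⟩ ⟨ham, hmb.le⟩ hx.2).le
  exact hLm.trans_lt (hφ ⟨ham, hmb.le⟩ ⟨hab, le_rfl⟩ hmb)

theorem lt_of_hasDerivAt_pos_of_tendsto_nhdsGT {φ φ' : ℝ → ℝ} {a b L : ℝ} (hab : a < b)
    (hderiv : ∀ x ∈ Ioc a b, HasDerivAt φ (φ' x) x) (hpos : ∀ x ∈ Ioo a b, 0 < φ' x)
    (hlim : Tendsto φ (𝓝[>] a) (𝓝 L)) : L < φ b := by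
  have hmono : StrictMonoOn φ (Ioc a b) := by
    refine strictMonoOn_of_hasDerivWithinAt_pos (convex_Ioc a b)
      (fun x hx ↦ (hderiv x hx).continuousAt.continuousWithinAt) (fun x hx ↦ ?_)
      (fun x hx ↦ hpos x (by rwa [interior_Ioc] at hx))
    rw [interior_Ioc] at hx ⊢
    exact (hderiv x (Ioo_subset_Ioc_self hx)).hasDerivWithinAt
  exact hmono.lt_of_tendsto_nhdsGT hab hlim

theorem isLittleO_integral_of_isLittleO_abs_rpow {E : Type*} [NormedAddCommGroup E]
    [NormedSpace ℝ E] {f : ℝ → E} {p : ℝ} (hp : 0 ≤ p) (h : f =o[𝓝[>] 0] fun t ↦ |t| ^ p) :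
    (fun a ↦ ∫ τ in (0 : ℝ)..a, f τ) =o[𝓝[>] 0] fun a ↦ |a| ^ (p + 1) := by
  rw [isLittleO_iff] at h ⊢
  intro ε hε
  obtain ⟨δ, hδ, hsub⟩ := mem_nhdsGT_iff_exists_Ioo_subset.mp (h hε)
  filter_upwards [Ioo_mem_nhdsGT hδ] with a ha
  have hbound : ∀ τ ∈ uIoc 0 a, ‖f τ‖ ≤ ε * |a| ^ p := by
    intro τ hτ
    rw [uIoc_of_le ha.1.le] at hτ
    calc ‖f τ‖ ≤ ε * ‖|τ| ^ p‖ := hsub ⟨hτ.1, hτ.2.trans_lt ha.2⟩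
      _ ≤ ε * |a| ^ p := by
        rw [Real.norm_of_nonneg (by positivity), abs_of_pos hτ.1, abs_of_pos ha.1]
        exact mul_le_mul_of_nonneg_left (Real.rpow_le_rpow hτ.1.le hτ.2 hp) hε.le
  calc ‖∫ τ in (0 : ℝ)..a, f τ‖ ≤ ε * |a| ^ p * |a - 0| :=
        intervalIntegral.norm_integral_le_of_norm_le_const hbound
    _ = ε * ‖|a| ^ (p + 1)‖ := by
        rw [sub_zero, Real.norm_of_nonneg (by positivity),
          Real.rpow_add_one' (abs_nonneg a) (by linarith), mul_assoc]

theorem tendsto_rpow_nhdsGT_zero {c : ℝ} (hc : 0 < c) :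
    Tendsto (fun t : ℝ ↦ t ^ c) (𝓝[>] 0) (𝓝 0) := by
  simpa [Real.zero_rpow hc.ne'] using
    (Real.continuousAt_rpow_const 0 c (Or.inr hc.le)).tendsto.mono_left nhdsWithin_le_nhds

/-- The quotient `F̃(t) / |t| ^ (2 + c)` of condition (f4), where `F̃(t) = f(t) t - 2 F(t)`. -/
noncomputable def excessQuotient (f F : ℝ → ℝ) (c t : ℝ) : ℝ :=
  (f t * t - 2 * F t) / |t| ^ (2 + c)

section

variable {f F : ℝ → ℝ} {c : ℝ}

theorem excessQuotient_mul_eq {t : ℝ} (ht : 0 < t) :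
    excessQuotient f F c t * (t ^ 2 * t ^ c) = f t * t - 2 * F t := by
  have hpow : t ^ (2 + c) = t ^ 2 * t ^ c := by rw [Real.rpow_add ht, Real.rpow_two]
  rw [excessQuotient, abs_of_pos ht, ← hpow, div_mul_cancel₀ _ (by positivity)]

theorem excessQuotient_comp_neg (t : ℝ) :
    excessQuotient (fun s ↦ -f (-s)) (fun s ↦ F (-s)) c t = excessQuotient f F c (-t) := by
  simp only [excessQuotient, abs_neg]
  ring

theorem tendsto_excessQuotient_nhdsGT_zero (hc : 0 ≤ c)
    (hf : f =o[𝓝[>] 0] fun t ↦ |t| ^ (1 + c)) (hF : F =o[𝓝[>] 0] fun t ↦ |t| ^ (2 + c)) :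
    Tendsto (excessQuotient f F c) (𝓝[>] 0) (𝓝 0) := by
  have hft : (fun t ↦ f t * t) =o[𝓝[>] 0] fun t ↦ |t| ^ (2 + c) := by
    refine (hf.mul_isBigO (isBigO_abs_right.mpr (isBigO_refl id _))).congr_right fun t ↦ ?_
    rw [id, show 2 + c = 1 + c + 1 by ring, Real.rpow_add_one' (abs_nonneg t) (by linarith)]
  exact (hft.sub (hF.const_mul_left 2)).tendsto_div_nhds_zero

theorem tendsto_div_sq_nhdsGT_zero (hc : 0 < c) (hF : F =o[𝓝[>] 0] fun t ↦ |t| ^ (2 + c)) :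
    Tendsto (fun t ↦ F t / t ^ 2) (𝓝[>] 0) (𝓝 0) := by
  have h := hF.tendsto_div_nhds_zero.mul (tendsto_rpow_nhdsGT_zero hc)
  rw [zero_mul] at h
  refine h.congr' (eventually_nhdsWithin_of_forall fun t (ht : 0 < t) ↦ ?_)
  rw [abs_of_pos ht, Real.rpow_add ht, Real.rpow_two]
  field_simp

theorem hasDerivAt_div_sq {t : ℝ} (hF : HasDerivAt F (f t) t) (ht : 0 < t) :
    HasDerivAt (fun x ↦ F x / x ^ 2) (excessQuotient f F c t * t ^ (c - 1)) t := by
  refine (hF.div (hasDerivAt_pow 2 t) (by positivity)).congr_deriv ?_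
  have : 0 < t ^ c := Real.rpow_pos_of_pos ht c
  rw [Real.rpow_sub_one ht.ne', eq_div_of_mul_eq (by positivity) (excessQuotient_mul_eq ht)]
  field_simp
  ring

theorem pos_of_excessQuotient_pos (hderiv : ∀ s, 0 < s → HasDerivAt F (f s) s)
    (hq : ∀ s, 0 < s → 0 < excessQuotient f F c s)
    (hlim : Tendsto (fun s ↦ F s / s ^ 2) (𝓝[>] 0) (𝓝 0)) {t : ℝ} (ht : 0 < t) : 0 < F t := by
  have h : 0 < F t / t ^ 2 :=
    lt_of_hasDerivAt_pos_of_tendsto_nhdsGT (φ := fun s ↦ F s / s ^ 2) ht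
      (fun s hs ↦ hasDerivAt_div_sq (hderiv s hs.1) hs.1)
      (fun s hs ↦ mul_pos (hq s hs.1) (Real.rpow_pos_of_pos hs.1 _)) hlim
  exact (div_pos_iff_of_pos_right (by positivity)).mp h

theorem mul_lt_of_strictMonoOn_excessQuotient (hc : 0 < c)
    (hderiv : ∀ s, 0 < s → HasDerivAt F (f s) s)
    (hmono : StrictMonoOn (excessQuotient f F c) (Ioi 0))
    (hlim : Tendsto (fun s ↦ F s / s ^ 2) (𝓝[>] 0) (𝓝 0)) {t : ℝ} (ht : 0 < t) :
    (2 + c) * F t < f t * t := by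
  set q := excessQuotient f F c t
  have key : 0 < q / c * t ^ c - F t / t ^ 2 := by
    refine lt_of_hasDerivAt_pos_of_tendsto_nhdsGT (φ := fun s ↦ q / c * s ^ c - F s / s ^ 2)
      (φ' := fun s ↦ (q - excessQuotient f F c s) * s ^ (c - 1)) ht (fun s hs ↦ ?_)
      (fun s hs ↦ mul_pos (sub_pos.mpr (hmono hs.1 ht hs.2)) (Real.rpow_pos_of_pos hs.1 _)) ?_
    · refine (((Real.hasDerivAt_rpow_const (p := c) (Or.inl hs.1.ne')).const_mul (q / c)).sub
        (hasDerivAt_div_sq (c := c) (hderiv s hs.1) hs.1)).congr_deriv ?_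
      field_simp
    · simpa using ((tendsto_rpow_nhdsGT_zero hc).const_mul (q / c)).sub hlim
  have hq : q * (t ^ 2 * t ^ c) = f t * t - 2 * F t := excessQuotient_mul_eq ht
  have hexpand : c * t ^ 2 * (q / c * t ^ c - F t / t ^ 2) = f t * t - 2 * F t - c * F t := by
    rw [← hq]
    field_simp
  have hpos := mul_pos (mul_pos hc (pow_pos ht 2)) key
  rw [hexpand] at hpos
  linarith

theorem ambrosettiRabinowitz_of_pos (hc : 0 < c) (hf : Continuous f)
    (hF : ∀ t, F t = ∫ τ in (0 : ℝ)..t, f τ) (hf0 : f =o[𝓝[>] 0] fun t ↦ |t| ^ (1 + c))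
    (hmono : StrictMonoOn (excessQuotient f F c) (Ioi 0)) {t : ℝ} (ht : 0 < t) :
    0 < F t ∧ (2 + c) * F t < f t * t := by
  have hderiv (s : ℝ) (_ : 0 < s) : HasDerivAt F (f s) s := by
    rw [funext hF]
    exact (hf.integral_hasStrictDerivAt 0 s).hasDerivAt
  have hF0 : F =o[𝓝[>] 0] fun t ↦ |t| ^ (2 + c) := by
    rw [funext hF, show 2 + c = 1 + c + 1 by ring]
    exact isLittleO_integral_of_isLittleO_abs_rpow (by linarith) hf0
  have hq (s : ℝ) (hs : 0 < s) : 0 < excessQuotient f F c s :=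
    (hmono.mono Ioc_subset_Ioi_self).lt_of_tendsto_nhdsGT hs
      (tendsto_excessQuotient_nhdsGT_zero hc.le hf0 hF0)
  have hlim := tendsto_div_sq_nhdsGT_zero hc hF0
  exact ⟨pos_of_excessQuotient_pos hderiv hq hlim ht,
    mul_lt_of_strictMonoOn_excessQuotient hc hderiv hmono hlim ht⟩

theorem ambrosettiRabinowitz_of_neg (hc : 0 < c) (hf : Continuous f)
    (hF : ∀ t, F t = ∫ τ in (0 : ℝ)..t, f τ) (hf0 : f =o[𝓝[<] 0] fun t ↦ |t| ^ (1 + c))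
    (hanti : StrictAntiOn (excessQuotient f F c) (Iio 0)) {t : ℝ} (ht : t < 0) :
    0 < F t ∧ (2 + c) * F t < f t * t := by
  have hFneg (s : ℝ) : F (-s) = ∫ τ in (0 : ℝ)..s, -f (-τ) := by
    rw [intervalIntegral.integral_neg, intervalIntegral.integral_comp_neg f,
      intervalIntegral.integral_symm, hF (-s), neg_zero, neg_neg]
  have hf0neg : (fun s ↦ -f (-s)) =o[𝓝[>] 0] fun t ↦ |t| ^ (1 + c) := by
    have h := (hf0.comp_tendsto (neg_zero (G := ℝ) ▸ tendsto_neg_nhdsGT_neg)).neg_left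
    simpa only [Function.comp_def, abs_neg] using h
  have hmono : StrictMonoOn (excessQuotient (fun s ↦ -f (-s)) (fun s ↦ F (-s)) c) (Ioi 0) :=
    fun a (ha : 0 < a) b (hb : 0 < b) hab ↦ by
      simpa only [excessQuotient_comp_neg] using
        hanti (neg_lt_zero.mpr hb) (neg_lt_zero.mpr ha) (neg_lt_neg hab)
  simpa using ambrosettiRabinowitz_of_pos hc (hf.comp continuous_neg).neg hFneg hf0neg hmono
    (neg_pos.mpr ht)

end

theorem stmt1_general (N : ℕ) (hN : 1 ≤ N) (f : ℝ → ℝ) (hf : Continuous f)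
    (F : ℝ → ℝ) (hF : ∀ t, F t = ∫ τ in (0:ℝ)..t, f τ)
    (hf1 : Tendsto (fun t => f t / |t| ^ (1 + 4 / (N:ℝ))) (nhdsWithin 0 {(0:ℝ)}ᶜ) (nhds 0))
    (hf4a : StrictAntiOn (fun t => (f t * t - 2 * F t) / |t| ^ (2 + 4 / (N:ℝ))) (Iio 0))
    (hf4b : StrictMonoOn (fun t => (f t * t - 2 * F t) / |t| ^ (2 + 4 / (N:ℝ))) (Ioi 0)) :
    ∀ t : ℝ, t ≠ 0 → (2 + 4 / (N:ℝ)) * F t > 0 ∧ f t * t > (2 + 4 / (N:ℝ)) * F t := by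
  have hc : (0 : ℝ) < 4 / N := div_pos four_pos (by exact_mod_cast hN)
  have hf0 : f =o[𝓝[≠] 0] fun t ↦ |t| ^ (1 + 4 / (N : ℝ)) := by
    refine (isLittleO_iff_tendsto' (eventually_nhdsWithin_of_forall fun t ht h ↦ ?_)).mpr hf1
    exact absurd h (Real.rpow_pos_of_pos (abs_pos.mpr ht) _).ne'
  intro t ht
  suffices h : 0 < F t ∧ (2 + 4 / (N : ℝ)) * F t < f t * t from
    ⟨mul_pos (by positivity) h.1, h.2⟩
  rcases ht.lt_or_gt with hneg | hpos
  · exact ambrosettiRabinowitz_of_neg hc hf hF (hf0.mono (nhdsWithin_mono _ fun s hs ↦ hs.ne))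
      hf4a hneg
  · exact ambrosettiRabinowitz_of_pos hc hf hF (hf0.mono (nhdsWithin_mono _ fun s hs ↦ hs.ne'))
      hf4b hpos

theorem stmt1 (N : ℕ) (hN : 1 ≤ N) (f : ℝ → ℝ) (hf : Continuous f)
    (F : ℝ → ℝ) (hF : ∀ t, F t = ∫ τ in (0:ℝ)..t, f τ)
    (hf1 : Tendsto (fun t => f t / |t| ^ (1 + 4 / (N:ℝ))) (nhdsWithin 0 {(0:ℝ)}ᶜ) (nhds 0))
    (hf3 : Tendsto (fun t => F t / |t| ^ (2 + 4 / (N:ℝ)))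
      (Filter.comap (fun t : ℝ => |t|) atTop) atTop)
    (hf4a : StrictAntiOn (fun t => (f t * t - 2 * F t) / |t| ^ (2 + 4 / (N:ℝ))) (Iio 0))
    (hf4b : StrictMonoOn (fun t => (f t * t - 2 * F t) / |t| ^ (2 + 4 / (N:ℝ))) (Ioi 0)) :
    ∀ t : ℝ, t ≠ 0 → (2 + 4 / (N:ℝ)) * F t > 0 ∧ f t * t > (2 + 4 / (N:ℝ)) * F t :=
  stmt1_general N hN f hf F hF hf1 hf4a hf4b
end

section
/- Let N ≥ 1 and f : ℝ → ℝ continuous with primitive F. Suppose t ↦ f(t)/t^{1+4/N} is strictly increasing on (0, ∞). Then for every t > 0 one has (2 + 4/N)·F(t) < f(t)·t. -/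
theorem stmt2 (N : ℕ) (hN : 1 ≤ N) (f : ℝ → ℝ) (hf : Continuous f)
    (F : ℝ → ℝ) (hF : ∀ t, F t = ∫ τ in (0:ℝ)..t, f τ)
    (hmono : StrictMonoOn (fun t => f t / t ^ (1 + 4 / (N:ℝ))) (Set.Ioi 0)) :
    ∀ t : ℝ, 0 < t → (2 + 4 / (N:ℝ)) * F t < f t * t := by
  intro t ht
  set p : ℝ := 1 + 4 / (N:ℝ) with hp_def
  have hN0 : (0:ℝ) < (N:ℝ) := by exact_mod_cast Nat.lt_of_lt_of_le Nat.zero_lt_one hN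
  have hp : 0 < p := by positivity
  set c : ℝ := f t / t ^ p with hc_def
  -- integrability
  have hint1 : IntervalIntegrable (fun τ : ℝ => c * τ ^ p - f τ) MeasureTheory.volume 0 t := by
    apply IntervalIntegrable.sub _ (hf.intervalIntegrable 0 t)
    exact (intervalIntegral.intervalIntegrable_rpow' (by linarith)).const_mul c
  have hpos : ∀ x ∈ Set.Ioo (0:ℝ) t, 0 < c * x ^ p - f x := by
    intro x hx
    have hxp : (0:ℝ) < x ^ p := Real.rpow_pos_of_pos hx.1 _
    have := hmono (Set.mem_Ioi.2 hx.1) (Set.mem_Ioi.2 ht) hx.2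
    simp only at this
    have : f x < c * x ^ p := by
      rw [hc_def]
      calc f x = f x / x ^ p * x ^ p := by field_simp
        _ < f t / t ^ p * x ^ p := by exact mul_lt_mul_of_pos_right this hxp
    linarith
  have hpos' : 0 < ∫ τ in (0:ℝ)..t, (c * τ ^ p - f τ) :=
    intervalIntegral.intervalIntegral_pos_of_pos_on hint1 hpos ht
  have hsplit : (∫ τ in (0:ℝ)..t, (c * τ ^ p - f τ))
      = c * (t ^ (p + 1) / (p + 1)) - F t := by
    rw [intervalIntegral.integral_sub
        ((intervalIntegral.intervalIntegrable_rpow' (by linarith)).const_mul c)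
        (hf.intervalIntegrable 0 t), intervalIntegral.integral_const_mul,
      integral_rpow (Or.inl (by linarith)), hF t]
    rw [Real.zero_rpow (by positivity)]
    ring
  have hFt : F t < c * (t ^ (p + 1) / (p + 1)) := by linarith [hsplit ▸ hpos']
  have htp : (0:ℝ) < t ^ p := Real.rpow_pos_of_pos ht _
  have hkey : c * (t ^ (p + 1) / (p + 1)) = f t * t / (p + 1) := by
    have htp1 : t ^ (p+1) = t ^ p * t := by rw [Real.rpow_add ht, Real.rpow_one]
    rw [hc_def, htp1]
    field_simp
  have : F t < f t * t / (p + 1) := hkey ▸ hFt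
  have hp1 : (0:ℝ) < p + 1 := by linarith
  have h2 : (2 + 4 / (N:ℝ)) = p + 1 := by rw [hp_def]; ring
  rw [h2]
  calc (p + 1) * F t < (p + 1) * (f t * t / (p + 1)) := by
        exact mul_lt_mul_of_pos_left this hp1
    _ = f t * t := by field_simp
end

section
/- Let N ≥ 1 and f : ℝ → ℝ continuous with primitive F. Suppose F(t) > 0 for all t > 0 and F(t)/t^{2+4/N} → 0 as t → 0⁺. Then there exists a sequence τₙ → 0⁺ of positive reals such that f(τₙ)·τₙ > (2 + 4/N)·F(τₙ) for every n. -/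
open Filter

lemma key_aux (p : ℝ) (hp : 0 < p) (f : ℝ → ℝ) (hf : Continuous f)
    (F : ℝ → ℝ) (hF : ∀ t, F t = ∫ τ in (0:ℝ)..t, f τ)
    (hpos : ∀ t : ℝ, 0 < t → 0 < F t)
    (hlim : Tendsto (fun t => F t / t ^ p) (nhdsWithin 0 (Set.Ioi 0)) (nhds 0))
    (ε : ℝ) (hε : 0 < ε) :
    ∃ t, 0 < t ∧ t < ε ∧ f t * t > p * F t := by
  by_contra h
  push_neg at h
  have hFeq : F = fun u => ∫ τ in (0:ℝ)..u, f τ := funext hF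
  have hFd : ∀ t : ℝ, HasDerivAt F (f t) t := by
    intro t
    rw [hFeq]
    exact intervalIntegral.integral_hasDerivAt_right (hf.intervalIntegrable 0 t)
      (hf.stronglyMeasurableAtFilter _ _) hf.continuousAt
  set G : ℝ → ℝ := fun t => F t / t ^ p with hG
  have hGd : ∀ t : ℝ, 0 < t →
      HasDerivAt G ((f t * t ^ p - F t * (p * t ^ (p - 1))) / (t ^ p) ^ 2) t := by
    intro t ht
    exact (hFd t).div (Real.hasDerivAt_rpow_const (Or.inl ht.ne'))
      (Real.rpow_pos_of_pos ht p).ne'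
  set δ : ℝ := ε / 2 with hδdef
  have hδ : 0 < δ := by positivity
  have hδε : δ < ε := by linarith
  -- derivative nonpositive on (0, δ]
  have hderiv_nonpos : ∀ t : ℝ, 0 < t → t < ε →
      (f t * t ^ p - F t * (p * t ^ (p - 1))) / (t ^ p) ^ 2 ≤ 0 := by
    intro t ht htε
    apply div_nonpos_of_nonpos_of_nonneg
    · have h1 : f t * t ≤ p * F t := h t ht htε
      have h2 : t ^ p = t ^ (p - 1) * t := by
        rw [← Real.rpow_add_one ht.ne' (p - 1)]; ring_nf
      have h3 : (0:ℝ) < t ^ (p - 1) := Real.rpow_pos_of_pos ht _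
      have : f t * t ^ p - F t * (p * t ^ (p - 1)) = t ^ (p - 1) * (f t * t - p * F t) := by
        rw [h2]; ring
      rw [this]
      exact mul_nonpos_of_nonneg_of_nonpos h3.le (by linarith)
    · positivity
  have hanti : ∀ a : ℝ, 0 < a → a < δ → AntitoneOn G (Set.Icc a δ) := by
    intro a ha haδ
    have hint : interior (Set.Icc a δ) = Set.Ioo a δ := interior_Icc
    apply antitoneOn_of_deriv_nonpos (convex_Icc a δ)
    · intro x hx
      exact ((hGd x (lt_of_lt_of_le ha hx.1)).continuousAt).continuousWithinAt
    · intro x hx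
      rw [hint] at hx
      exact ((hGd x (ha.trans hx.1)).differentiableAt).differentiableWithinAt
    · intro x hx
      rw [hint] at hx
      have hx0 : 0 < x := ha.trans hx.1
      rw [(hGd x hx0).deriv]
      exact hderiv_nonpos x hx0 (hx.2.trans hδε)
  have hc : 0 < G δ := div_pos (hpos δ hδ) (Real.rpow_pos_of_pos hδ p)
  have hev : ∀ᶠ t in nhdsWithin 0 (Set.Ioi 0), G t < G δ :=
    hlim.eventually (gt_mem_nhds hc)
  have hmem : Set.Ioo (0:ℝ) δ ∈ nhdsWithin (0:ℝ) (Set.Ioi 0) :=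
    Ioo_mem_nhdsGT_of_mem ⟨le_refl 0, hδ⟩
  obtain ⟨a, haG, haI⟩ := (hev.and (eventually_of_mem hmem (fun x hx => hx))).exists
  have : G δ ≤ G a := hanti a haI.1 haI.2 ⟨le_refl a, haI.2.le⟩ ⟨haI.2.le, le_refl δ⟩ haI.2.le
  linarith

theorem stmt4 (N : ℕ) (hN : 1 ≤ N) (f : ℝ → ℝ) (hf : Continuous f)
    (F : ℝ → ℝ) (hF : ∀ t, F t = ∫ τ in (0:ℝ)..t, f τ)
    (hpos : ∀ t : ℝ, 0 < t → 0 < F t)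
    (hlim : Tendsto (fun t => F t / t ^ (2 + 4 / (N:ℝ))) (nhdsWithin 0 (Set.Ioi 0)) (nhds 0)) :
    ∃ τ : ℕ → ℝ, (∀ n, 0 < τ n) ∧ Tendsto τ atTop (nhds 0) ∧
      ∀ n, f (τ n) * τ n > (2 + 4 / (N:ℝ)) * F (τ n) := by
  have hp : (0:ℝ) < 2 + 4 / (N:ℝ) := by
    have : (0:ℝ) < (N:ℝ) := by exact_mod_cast hN
    positivity
  have key : ∀ n : ℕ, ∃ t : ℝ, 0 < t ∧ t < 1 / (n + 1 : ℝ) ∧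
      f t * t > (2 + 4 / (N:ℝ)) * F t := by
    intro n
    exact key_aux _ hp f hf F hF hpos hlim _ (by positivity)
  choose τ h1 h2 h3 using key
  refine ⟨τ, h1, ?_, h3⟩
  apply squeeze_zero (fun n => (h1 n).le) (fun n => (h2 n).le)
  exact tendsto_one_div_add_atTop_nhds_zero_nat
end

section
/- Let N ≥ 1 and f : ℝ → ℝ continuous with primitive F. Suppose F(t)/t^{2+4/N} → +∞ as t → +∞. Then there exists a sequence σₙ → +∞ such that f(σₙ)·σₙ > (2 + 4/N)·F(σₙ) for every n. -/
open Filter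

theorem stmt5 (N : ℕ) (hN : 1 ≤ N) (f : ℝ → ℝ) (hf : Continuous f)
    (F : ℝ → ℝ) (hF : ∀ t, F t = ∫ τ in (0:ℝ)..t, f τ)
    (hlim : Tendsto (fun t => F t / t ^ (2 + 4 / (N:ℝ))) atTop atTop) :
    ∃ σ : ℕ → ℝ, Tendsto σ atTop atTop ∧
      ∀ n, f (σ n) * σ n > (2 + 4 / (N:ℝ)) * F (σ n) := by
  set p : ℝ := 2 + 4 / (N:ℝ) with hp
  have hp1 : (1:ℝ) ≤ p := by
    have : (0:ℝ) ≤ 4 / (N:ℝ) := by positivity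
    simp only [hp]; linarith
  have hderF : ∀ t, HasDerivAt F (f t) t := by
    intro t
    have h := (hf.integral_hasStrictDerivAt 0 t).hasDerivAt
    have : F = fun u => ∫ τ in (0:ℝ)..u, f τ := funext hF
    rw [this]; exact h
  have hFc : Continuous F := by
    have := fun t => (hderF t).differentiableAt
    exact (Differentiable.continuous this)
  have key : ∀ A : ℝ, ∃ σ, σ > A ∧ f σ * σ > p * F σ := by
    intro A
    by_contra h
    push_neg at h
    set a : ℝ := max A 0 + 1 with ha
    have haA : A < a := by
      have := le_max_left A 0
      simp only [ha]; linarith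
    have ha0 : (0:ℝ) < a := by
      have := le_max_right A 0
      simp only [ha]; linarith
    set G : ℝ → ℝ := fun t => F t / t ^ p with hG
    have hGd : ∀ t : ℝ, 0 < t → HasDerivAt G
        ((f t * t ^ p - F t * (p * t ^ (p - 1))) / (t ^ p) ^ 2) t := by
      intro t ht
      exact (hderF t).div (Real.hasDerivAt_rpow_const (Or.inl (ne_of_gt ht)))
        (by positivity)
    have hanti : AntitoneOn G (Set.Ici a) := by
      apply antitoneOn_of_deriv_nonpos (convex_Ici a)
      · apply ContinuousOn.div hFc.continuousOn
        · exact fun x hx => (Real.continuousAt_rpow_const x p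
            (Or.inl (ne_of_gt (lt_of_lt_of_le ha0 hx)))).continuousWithinAt
        · intro x hx
          have hx0 : 0 < x := lt_of_lt_of_le ha0 hx
          positivity
      · intro x hx
        rw [interior_Ici] at hx
        exact ((hGd x (lt_trans ha0 hx)).differentiableAt).differentiableWithinAt
      · intro x hx
        rw [interior_Ici] at hx
        have hx0 : 0 < x := lt_trans ha0 hx
        rw [(hGd x hx0).deriv]
        apply div_nonpos_of_nonpos_of_nonneg _ (by positivity)
        have hle : f x * x ≤ p * F x := h x (lt_trans haA hx)
        have hxp : x ^ p = x ^ (p - 1) * x := by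
          rw [← Real.rpow_add_one (ne_of_gt hx0) (p - 1)]
          ring_nf
        rw [hxp]
        nlinarith [Real.rpow_pos_of_pos hx0 (p - 1)]
    -- contradiction with hlim
    have : ∀ᶠ t in atTop, G a + 1 ≤ G t := hlim.eventually_ge_atTop (G a + 1)
    obtain ⟨t, ht, hta⟩ := (this.and (eventually_ge_atTop a)).exists
    have := hanti (Set.self_mem_Ici) hta hta
    linarith
  choose σ hσ1 hσ2 using fun n : ℕ => key n
  refine ⟨σ, ?_, hσ2⟩
  exact tendsto_atTop_mono (fun n => le_of_lt (hσ1 n)) tendsto_natCast_atTop_atTop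
end
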